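/- arXiv:2405.13842 — 3 statements merged into one kernel-verified Lean document; each statement's English description precedes it below -/
import Mathlib

section
/- Clopen Ramsey Theorem: for every front (F, rk_F) and every coloring c : F → {0,1}, there exists an infinite set H ⊆ ⋃F such that c is constant on F↾_H = {σ ∈ F : σ ⊆ H}. -/
open Ordinal

universe u

/-! ### Basic wqo notions -/

/-- `P` is a wqo: there is no bad sequence. -/
def IsWqo (P : Type u) [Preorder P] : Prop :=
  ¬ ∃ f : ℕ → P, ∀ i j, i < j → ¬ f i ≤ f j

/-- `P` is well-founded as a quasi-order: no strictly descending ω-sequence. -/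
def WFqo (P : Type u) [Preorder P] : Prop :=
  ¬ ∃ x : ℕ → P, ∀ i, x (i + 1) ≤ x i ∧ ¬ x i ≤ x (i + 1)

/-! ### Fronts, identifying finite subsets of ℕ with their increasing enumerations -/

/-- `σ ⊑ τ`: `σ` is an initial segment of `τ`. -/
def InitSeg (σ τ : Finset ℕ) : Prop :=
  σ ⊆ τ ∧ ∀ a ∈ σ, ∀ b ∈ τ, b ≤ a → b ∈ σ

/-- `σ` is a (finite) initial segment of the set `X`. -/
def InitSegSet (σ : Finset ℕ) (X : Set ℕ) : Prop :=
  ↑σ ⊆ X ∧ ∀ a ∈ σ, ∀ b ∈ X, b ≤ a → b ∈ σ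

/-- A front `(F, rk)`. -/
structure Front where
  F : Set (Finset ℕ)
  infinite : F.Infinite
  antichain : ∀ σ ∈ F, ∀ τ ∈ F, InitSeg σ τ → σ = τ
  covers : ∀ X : Set ℕ, X.Infinite → (X ⊆ {n | ∃ σ ∈ F, n ∈ σ}) →
    ∃ σ ∈ F, InitSegSet σ X
  rk : Finset ℕ → Ordinal.{0}
  rk_strict : ∀ σ τ : Finset ℕ,
    (∃ ρ ∈ F, InitSeg σ ρ ∧ σ ≠ ρ) → (∃ ρ ∈ F, InitSeg τ ρ ∧ τ ≠ ρ) →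
    InitSeg σ τ → σ ≠ τ → rk τ < rk σ

/-- The rank of the front is the rank of the empty sequence. -/
def Front.rank (Fr : Front) : Ordinal.{0} := Fr.rk ∅

/-- `⋃ F`. -/
def Front.union (Fr : Front) : Set ℕ := {n | ∃ σ ∈ Fr.F, n ∈ σ}

/-- `σ ◁ τ`. -/
def Tri (σ τ : Finset ℕ) : Prop :=
  ∃ (hσ : σ.Nonempty) (hτ : τ.Nonempty),
    σ.min' hσ < τ.min' hτ ∧
    (InitSeg (σ.erase (σ.min' hσ)) τ ∨ InitSeg τ (σ.erase (σ.min' hσ)))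

/-- `g` is a bad array on the front `Fr`. -/
def BadArray {P : Type u} [Preorder P] (Fr : Front) (g : Finset ℕ → P) : Prop :=
  ∀ σ ∈ Fr.F, ∀ τ ∈ Fr.F, Tri σ τ → ¬ g σ ≤ g τ

/-- `P` is an `α`-wqo. -/
def IsAlphaWqo (α : Ordinal.{0}) (P : Type u) [Preorder P] : Prop :=
  WFqo P ∧ ∀ Fr : Front, Fr.rank < α → ∀ g : Finset ℕ → P, ¬ BadArray Fr g

/-! ### Transfinite sequences -/

/-- A transfinite sequence over `Q`: a function `|u| → Q` with `|u| > 0`. -/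
structure TSeq (Q : Type u) where
  len : Ordinal.{0}
  pos : 0 < len
  toFun : {γ : Ordinal.{0} // γ < len} → Q

namespace TSeq

variable {Q : Type u}

/-- Embeddability `u ⪯ v`. -/
def Emb [Preorder Q] (u v : TSeq Q) : Prop :=
  ∃ f : {γ // γ < u.len} → {γ // γ < v.len},
    (∀ a b, a.1 < b.1 → (f a).1 < (f b).1) ∧ ∀ a, u.toFun a ≤ v.toFun (f a)

/-- Weak embeddability `u ⪯* v`. -/
def WEmb [Preorder Q] (u v : TSeq Q) : Prop :=
  ∃ f : {γ // γ < u.len} → {γ // γ < v.len},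
    (∀ a b, a.1 ≤ b.1 → (f a).1 ≤ (f b).1) ∧ ∀ a, u.toFun a ≤ v.toFun (f a)

/-- The subsegment `u↾[γ, δ)`. -/
noncomputable def seg (u : TSeq Q) (γ δ : Ordinal.{0}) (h1 : γ < δ) (h2 : δ ≤ u.len) : TSeq Q where
  len := δ - γ
  pos := by rw [Ordinal.lt_sub]; simpa using h1
  toFun := fun ζ => u.toFun ⟨γ + ζ.1, lt_of_lt_of_le (Ordinal.lt_sub.mp ζ.2) h2⟩

/-- The tail `u↾[γ, |u|)`. -/
noncomputable def tail (u : TSeq Q) (γ : Ordinal.{0}) (h : γ < u.len) : TSeq Q :=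
  u.seg γ u.len h le_rfl

/-- `u` is indecomposable: it embeds into each of its tails. -/
def Indec [Preorder Q] (u : TSeq Q) : Prop :=
  ∀ γ (h : γ < u.len), u.Emb (u.tail γ h)

/-- `u` is weakly indecomposable. -/
def WIndec [Preorder Q] (u : TSeq Q) : Prop :=
  ∀ γ (h : γ < u.len), u.WEmb (u.tail γ h)

/-- `u ⊴ v`: cofinal embeddability. -/
def CofEmb [Preorder Q] (u v : TSeq Q) : Prop :=
  ∀ γ (h : γ < v.len), ∃ δ, ∃ h' : δ < u.len, (u.tail δ h').Emb (v.tail γ h)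

/-- `u ⊴* v`: weak cofinal embeddability. -/
def WCofEmb [Preorder Q] (u v : TSeq Q) : Prop :=
  ∀ γ (h : γ < v.len), ∃ δ, ∃ h' : δ < u.len, (u.tail δ h').WEmb (v.tail γ h)

end TSeq

/-! ### The hierarchy `V̇(Q)` -/

/-- Hereditarily countable, hereditarily nonempty sets with urelements from `Q`. -/
inductive Vdot (Q : Type u) : Type u where
  | up : Q → Vdot Q
  | sup : (ℕ → Vdot Q) → Vdot Q

namespace Vdot

variable {Q : Type u}

/-- Rank plus one for sets; `0` on urelements. -/
noncomputable def rkp : Vdot Q → Ordinal.{0}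
  | .up _ => 0
  | .sup f => (⨆ n, rkp (f n)) + 1

/-- The rank of an element of `V̇(Q)` (`0` on urelements). -/
noncomputable def rk : Vdot Q → Ordinal.{0}
  | .up _ => 0
  | .sup f => ⨆ n, rkp (f n)

/-- `x` is an urelement. -/
def IsUr (x : Vdot Q) : Prop := ∃ q, x = up q

/-- Membership in `V̇_α(Q)`: urelements, and sets of rank `< α`. -/
noncomputable def memV (α : Ordinal.{0}) (x : Vdot Q) : Prop := x.IsUr ∨ x.rk < α

/-- Auxiliary: `up p ≲ y` (equivalently `up p ≲* y`). -/
def leUp [Preorder Q] (p : Q) : Vdot Q → Prop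
  | .up q => p ≤ q
  | .sup g => ∃ j, leUp p (g j)

/-- The relation `≲` on `V̇(Q)`. -/
def vle [Preorder Q] : Vdot Q → Vdot Q → Prop
  | .up p, y => leUp p y
  | .sup _, .up _ => False
  | .sup f, .sup g => ∀ i, ∃ j, vle (f i) (g j)

/-- The relation `≲*` on `V̇(Q)`. -/
def vles [Preorder Q] : Vdot Q → Vdot Q → Prop
  | .up p, y => leUp p y
  | .sup f, .up q => ∀ i, vles (f i) (up q)
  | .sup f, .sup g => ∀ i, ∃ j, vles (f i) (g j)

/-- The support of an element of `V̇(Q)`. -/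
def supp : Vdot Q → Set Q
  | .up q => {q}
  | .sup f => ⋃ n, supp (f n)

end Vdot


/-!
Combinatorial forcing in the style of Galvin and Prikry, for an arbitrary family `G` of finite
sets. An infinite `X` accepts a finite `s` if `s ∪ Z` has an initial segment in `G` for every
infinite `Z ⊆ X` above `s`, and rejects `s` if no infinite subset of `X` accepts it. A
diagonalization gives an infinite `X` deciding every finite `s ⊆ X`. If `X` accepts `∅`, every
infinite subset of `X` has an initial segment in `G`. Otherwise, when `X` rejects `s`, it accepts
`s ∪ {y}` for only finitely many `y`, so a second diagonalization thins `X` to an infinite `H`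
all of whose finite subsets are rejected; as members of `G` are accepted, none of them lies in `H`.

For the theorem take `G = {σ ∈ F | c σ = 0}`. In the first case every `σ ∈ F` inside `H` is an
initial segment of `σ ∪ (H above σ)`, which also has an initial segment in `G`; since `F` is a
`⊑`-antichain the two coincide, so `c σ = 0`. In the second case `c σ = 1` throughout.
-/

open Set

def above (s : Finset ℕ) (X : Set ℕ) : Set ℕ := {x ∈ X | ∀ a ∈ s, a < x}

section Above

variable {s : Finset ℕ} {X Y Z : Set ℕ}

lemma above_subset : above s X ⊆ X := fun _ hx => hx.1

lemma above_mono (h : Y ⊆ X) : above s Y ⊆ above s X := fun _ hx => ⟨h hx.1, hx.2⟩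

@[simp]
lemma above_empty : above ∅ X = X := by
  ext; simp [above]

@[simp]
lemma above_above : above s (above s X) = above s X := by
  ext; simp [above]

lemma Set.Infinite.above (hX : X.Infinite) (s : Finset ℕ) : (above s X).Infinite :=
  (hX.sdiff (finite_Iic (s.sup id))).mono fun _ hx =>
    ⟨hx.1, fun _ ha => (Finset.le_sup (f := id) ha).trans_lt (not_le.1 hx.2)⟩

lemma initSegSet_union_of_subset_above (hZ : Z ⊆ above s X) : InitSegSet s (↑s ∪ Z) := by
  refine ⟨subset_union_left, ?_⟩
  rintro a ha b (hb | hb) hba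
  · exact hb
  · exact absurd hba (not_le.2 ((hZ hb).2 a ha))

end Above

lemma InitSegSet.initSeg_or_initSeg {σ τ : Finset ℕ} {Z : Set ℕ}
    (hσ : InitSegSet σ Z) (hτ : InitSegSet τ Z) : InitSeg σ τ ∨ InitSeg τ σ := by
  by_cases hστ : σ ⊆ τ
  · exact Or.inl ⟨hστ, fun a ha b hb hba => hσ.2 a ha b (hτ.1 hb) hba⟩
  · obtain ⟨a, haσ, haτ⟩ := Finset.not_subset.1 hστ
    refine Or.inr ⟨fun b hb => ?_, fun a' ha' b hb hba => hτ.2 a' ha' b (hσ.1 hb) hba⟩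
    rcases le_or_gt b a with hba | hab
    · exact hσ.2 a haσ b (hτ.1 hb) hba
    · exact absurd (hτ.2 b hb a (hσ.1 haσ) hab.le) haτ

lemma StrictMono.exists_index_bound {α : Type*} [LinearOrder α] {f : ℕ → α} (hf : StrictMono f)
    {s : Finset α}
    (hs : ↑s ⊆ range f) :
    ∃ k, (∀ a ∈ s, ∃ i < k, f i = a) ∧ ∀ m, (∀ a ∈ s, a < f m) → k ≤ m := by
  classical
  induction s using Finset.induction_on with
  | empty => exact ⟨0, by simp, fun m _ => m.zero_le⟩
  | insert a s _ ih =>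
    rw [Finset.coe_insert, insert_subset_iff] at hs
    obtain ⟨⟨i, rfl⟩, hs⟩ := hs
    obtain ⟨k, hsk, hk⟩ := ih hs
    refine ⟨max k (i + 1), ?_, fun m hm => ?_⟩
    · rw [Finset.forall_mem_insert]
      refine ⟨⟨i, by omega, rfl⟩, fun a ha => ?_⟩
      obtain ⟨j, hj, rfl⟩ := hsk a ha
      exact ⟨j, by omega, rfl⟩
    · rw [Finset.forall_mem_insert] at hm
      have him : i < m := hf.lt_iff_lt.1 hm.1
      have hkm : k ≤ m := hk m hm.2
      omega

section Diagonalization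

variable {P : Finset ℕ → Set ℕ → Prop} {U : Set ℕ}

lemma exists_subset_forall_mem_of_dense (hanti : ∀ s X Y, Y ⊆ X → P s X → P s Y)
    (hdense : ∀ s, ∀ X ⊆ U, X.Infinite → ∃ Y ⊆ X, Y.Infinite ∧ P s Y)
    (S : Finset (Finset ℕ)) {X : Set ℕ} (hXU : X ⊆ U) (hX : X.Infinite) :
    ∃ Y ⊆ X, Y.Infinite ∧ ∀ s ∈ S, P s Y := by
  classical
  induction S using Finset.induction_on with
  | empty => exact ⟨X, subset_rfl, hX, by simp⟩
  | insert s S _ ih =>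
    obtain ⟨Y, hYX, hY, hantiY⟩ := ih
    obtain ⟨Y', hY'Y, hY', hantis⟩ := hdense s Y (hYX.trans hXU) hY
    refine ⟨Y', hY'Y.trans hYX, hY', ?_⟩
    rw [Finset.forall_mem_insert]
    exact ⟨hantis, fun t ht => hanti t Y Y' hY'Y (hantiY t ht)⟩

theorem exists_infinite_forall_above_of_dense (hanti : ∀ s X Y, Y ⊆ X → P s X → P s Y)
    (hdense : ∀ s, ∀ X ⊆ U, X.Infinite → ∃ Y ⊆ X, Y.Infinite ∧ P s Y) (hU : U.Infinite) :
    ∃ H ⊆ U, H.Infinite ∧ ∀ s : Finset ℕ, ↑s ⊆ H → P s (above s H) := by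
  have step : ∀ X : {X : Set ℕ // X ⊆ U ∧ X.Infinite}, ∃ Y : {X : Set ℕ // X ⊆ U ∧ X.Infinite},
      Y.1 ⊆ above {sInf X.1} X.1 ∧ ∀ s ⊆ Finset.range (sInf X.1 + 1), P s Y.1 := by
    rintro ⟨X, hXU, hX⟩
    obtain ⟨Y, hYX, hY, hantiY⟩ := exists_subset_forall_mem_of_dense hanti hdense
      (Finset.range (sInf X + 1)).powerset (above_subset.trans hXU) (hX.above {sInf X})
    exact ⟨⟨Y, hYX.trans (above_subset.trans hXU), hY⟩, hYX,
      fun s hs => hantiY s (Finset.mem_powerset.2 hs)⟩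
  -- Stage `n + 1` lies above the least element `g n` of stage `n` and handles every `s ⊆ [0, g n]`;
  -- `H` collects the `g (n + 1)`, so `H` above a finite `s ⊆ H` lies in a stage that handled `s`.
  choose next hnext_above hnext_P using step
  let X : ℕ → {X : Set ℕ // X ⊆ U ∧ X.Infinite} := fun n => next^[n] ⟨U, subset_rfl, hU⟩
  let g : ℕ → ℕ := fun n => sInf (X n).1
  have hX_succ : ∀ n, X (n + 1) = next (X n) := fun n => Function.iterate_succ_apply' ..
  have hgX : ∀ n, g n ∈ (X n).1 := fun n => Nat.sInf_mem (X n).2.2.nonempty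
  have hX_anti : Antitone fun n => (X n).1 := antitone_nat_of_succ_le fun n => by
    rw [hX_succ]; exact (hnext_above _).trans above_subset
  have hg : StrictMono g := strictMono_nat_of_lt_succ fun n => by
    have := hnext_above (X n) (hX_succ n ▸ hgX (n + 1))
    exact this.2 _ (Finset.mem_singleton_self _)
  have hgs : StrictMono fun n => g (n + 1) := hg.comp (strictMono_id.add_const 1)
  refine ⟨range fun n => g (n + 1), ?_, infinite_range_of_injective hgs.injective, ?_⟩
  · rintro _ ⟨n, rfl⟩
    exact (X (n + 1)).2.1 (hgX (n + 1))
  · intro s hs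
    obtain ⟨k, hsk, hk⟩ := hgs.exists_index_bound hs
    refine hanti s _ _ ?_ (hX_succ k ▸ hnext_P (X k) s fun a ha => ?_)
    · rintro _ ⟨⟨m, rfl⟩, hm⟩
      exact hX_anti (Nat.succ_le_succ (hk m hm)) (hgX (m + 1))
    · obtain ⟨i, hik, rfl⟩ := hsk a ha
      exact Finset.mem_range.2 (Nat.lt_succ_of_le (hg.monotone hik))

end Diagonalization

section Forcing

variable {G : Set (Finset ℕ)} {s t : Finset ℕ} {U X Y : Set ℕ}

def Accepts (G : Set (Finset ℕ)) (s : Finset ℕ) (X : Set ℕ) : Prop :=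
  ∀ Z ⊆ above s X, Z.Infinite → ∃ t ∈ G, InitSegSet t (↑s ∪ Z)

def Rejects (G : Set (Finset ℕ)) (s : Finset ℕ) (X : Set ℕ) : Prop :=
  ∀ Y ⊆ X, Y.Infinite → ¬ Accepts G s Y

lemma Accepts.mono (h : Accepts G s X) (hYX : Y ⊆ X) : Accepts G s Y :=
  fun Z hZ => h Z (hZ.trans (above_mono hYX))

lemma Rejects.mono (h : Rejects G s X) (hYX : Y ⊆ X) : Rejects G s Y :=
  fun Z hZY => h Z (hZY.trans hYX)

lemma accepts_above_iff : Accepts G s (above s X) ↔ Accepts G s X := by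
  simp only [Accepts, above_above]

lemma Rejects.of_above (h : Rejects G s (above s X)) : Rejects G s X :=
  fun _ hYX hY hacc => h _ (above_mono hYX) (hY.above s) (accepts_above_iff.2 hacc)

lemma accepts_of_mem (ht : t ∈ G) : Accepts G t X :=
  fun _ hZ _ => ⟨t, ht, initSegSet_union_of_subset_above hZ⟩

lemma exists_infinite_forall_accepts_or_rejects (G : Set (Finset ℕ)) (hU : U.Infinite) :
    ∃ X ⊆ U, X.Infinite ∧ ∀ s : Finset ℕ, ↑s ⊆ X → Accepts G s X ∨ Rejects G s X := by
  have hdense : ∀ s, ∀ X ⊆ U, X.Infinite →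
      ∃ Y ⊆ X, Y.Infinite ∧ (Accepts G s Y ∨ Rejects G s Y) := by
    intro s X _ hX
    by_cases hrej : Rejects G s X
    · exact ⟨X, subset_rfl, hX, Or.inr hrej⟩
    · simp only [Rejects, not_forall, not_not] at hrej
      obtain ⟨Y, hYX, hY, hacc⟩ := hrej
      exact ⟨Y, hYX, hY, Or.inl hacc⟩
  obtain ⟨X, hXU, hX, hdec⟩ := exists_infinite_forall_above_of_dense
    (fun _ _ _ hYX h => h.imp (·.mono hYX) (·.mono hYX)) hdense hU
  exact ⟨X, hXU, hX, fun s hs =>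
    (hdec s hs).imp accepts_above_iff.1 Rejects.of_above⟩

lemma Rejects.finite_accepts_insert (h : Rejects G s X) :
    {y ∈ above s X | Accepts G (insert y s) X}.Finite := by
  by_contra hB
  refine h _ (fun y hy => above_subset hy.1) hB fun Z hZ hZinf => ?_
  -- The least element `y` of `Z` is accepted next to `s`, and `insert y s ∪ (Z \ {y}) = s ∪ Z`.
  have hyZ : sInf Z ∈ Z := Nat.sInf_mem hZinf.nonempty
  set y := sInf Z
  have hZ' : Z \ {y} ⊆ above (insert y s) X := by
    intro z ⟨hz, hzy⟩
    refine ⟨(hZ hz).1.1.1, fun a ha => ?_⟩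
    rcases Finset.mem_insert.1 ha with rfl | ha
    · exact (Nat.sInf_le hz).lt_of_ne (Ne.symm hzy)
    · exact (hZ hz).2 a ha
  obtain ⟨t, htG, ht⟩ := (hZ hyZ).1.2 _ hZ' (hZinf.sdiff (finite_singleton y))
  refine ⟨t, htG, ?_⟩
  rwa [Finset.coe_insert, insert_union, ← union_insert, insert_sdiff_self_of_mem hyZ] at ht

lemma Rejects.exists_infinite_forall_rejects (h : Rejects G ∅ X) (hX : X.Infinite)
    (hdec : ∀ s : Finset ℕ, ↑s ⊆ X → Accepts G s X ∨ Rejects G s X) :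
    ∃ H ⊆ X, H.Infinite ∧ ∀ s : Finset ℕ, ↑s ⊆ H → Rejects G s X := by
  classical
  have hdense : ∀ s, ∀ Y ⊆ X, Y.Infinite → ∃ Y' ⊆ Y, Y'.Infinite ∧
      (Rejects G s X → ∀ y ∈ above s Y', ¬ Accepts G (insert y s) X) := by
    intro s Y hYX hY
    by_cases hrej : Rejects G s X
    · refine ⟨Y \ {y ∈ above s X | Accepts G (insert y s) X}, sdiff_subset,
        hY.sdiff hrej.finite_accepts_insert, fun _ y hy hacc => hy.1.2 ⟨?_, hacc⟩⟩
      exact ⟨hYX hy.1.1, hy.2⟩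
    · exact ⟨Y, subset_rfl, hY, fun h' => absurd h' hrej⟩
  obtain ⟨H, hHX, hH, hinsert⟩ := exists_infinite_forall_above_of_dense
    (fun _ _ _ hYX h hrej y hy => h hrej y (above_mono hYX hy)) hdense hX
  refine ⟨H, hHX, hH, fun s => Finset.induction_on_max s (fun _ => h) fun y s hys ih hs => ?_⟩
  rw [Finset.coe_insert, insert_subset_iff] at hs
  have hnot : ¬ Accepts G (insert y s) X := hinsert s hs.2 (ih hs.2) y ⟨⟨hs.1, hys⟩, hys⟩
  have hsX : ↑(insert y s) ⊆ X := by
    rw [Finset.coe_insert]; exact insert_subset (hHX hs.1) (hs.2.trans hHX)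
  exact (hdec _ hsX).resolve_left hnot

theorem exists_infinite_forall_initSegSet_mem_or_forall_not_subset (G : Set (Finset ℕ))
    (hU : U.Infinite) :
    ∃ H ⊆ U, H.Infinite ∧
      ((∀ Z ⊆ H, Z.Infinite → ∃ t ∈ G, InitSegSet t Z) ∨ ∀ t ∈ G, ¬ ↑t ⊆ H) := by
  obtain ⟨X, hXU, hX, hdec⟩ := exists_infinite_forall_accepts_or_rejects G hU
  rcases hdec ∅ (by simp) with hacc | hrej
  · refine ⟨X, hXU, hX, Or.inl fun Z hZX hZ => ?_⟩
    simpa using hacc Z (by simpa using hZX) hZ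
  · obtain ⟨H, hHX, hH, hrejH⟩ := hrej.exists_infinite_forall_rejects hX hdec
    exact ⟨H, hHX.trans hXU, hH, Or.inr fun t ht htH =>
      hrejH t htH X subset_rfl hX (accepts_of_mem ht)⟩

end Forcing

lemma Front.union_infinite (Fr : Front) : Fr.union.Infinite := fun hfin =>
  Fr.infinite <| hfin.toFinset.powerset.finite_toSet.subset fun σ hσ =>
    Finset.mem_powerset.2 fun _ hn => hfin.mem_toFinset.2 ⟨σ, hσ, hn⟩

lemma Front.mem_of_forall_initSegSet_mem (Fr : Front) {G : Set (Finset ℕ)} (hG : G ⊆ Fr.F)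
    {H : Set ℕ} (hH : H.Infinite) (hHG : ∀ Z ⊆ H, Z.Infinite → ∃ t ∈ G, InitSegSet t Z)
    {σ : Finset ℕ} (hσ : σ ∈ Fr.F) (hσH : ↑σ ⊆ H) : σ ∈ G := by
  have hZH : ↑σ ∪ above σ H ⊆ H := union_subset hσH above_subset
  obtain ⟨t, htG, ht⟩ := hHG _ hZH ((hH.above σ).mono subset_union_right)
  have hσZ : InitSegSet σ (↑σ ∪ above σ H) := initSegSet_union_of_subset_above subset_rfl
  rcases hσZ.initSeg_or_initSeg ht with h | h
  · rwa [Fr.antichain σ hσ t (hG htG) h]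
  · rwa [← Fr.antichain t (hG htG) σ hσ h]

theorem statement1 (Fr : Front) (c : Finset ℕ → Fin 2) :
    ∃ H : Set ℕ, H.Infinite ∧ H ⊆ Fr.union ∧
      ∀ σ ∈ Fr.F, ∀ τ ∈ Fr.F, ↑σ ⊆ H → ↑τ ⊆ H → c σ = c τ := by
  obtain ⟨H, hHU, hH, hhom⟩ := exists_infinite_forall_initSegSet_mem_or_forall_not_subset
    {σ ∈ Fr.F | c σ = 0} Fr.union_infinite
  refine ⟨H, hH, hHU, fun σ hσ τ hτ hσH hτH => ?_⟩
  rcases hhom with hsegs | havoid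
  · have hG : {σ ∈ Fr.F | c σ = 0} ⊆ Fr.F := fun _ h => h.1
    rw [(Fr.mem_of_forall_initSegSet_mem hG hH hsegs hσ hσH).2,
      (Fr.mem_of_forall_initSegSet_mem hG hH hsegs hτ hτH).2]
  · have hσ0 : c σ ≠ 0 := fun h => havoid σ ⟨hσ, h⟩ hσH
    have hτ0 : c τ ≠ 0 := fun h => havoid τ ⟨hτ, h⟩ hτH
    omega
end

section
/- Let Q be a quasi-order and α an ordinal. If there is a bad sequence f : ℕ → V̇_α(Q) with respect to the relation ≲, then there is a bad array g : F → Q × ℕ whose front has rank ≤ α, where Q × ℕ carries the componentwise order (ℕ with its usual order). -/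
open Ordinal

universe u

/-! ### Auxiliary development for statement3 -/

section Statement3Aux

open Vdot

/-! #### Initial segment combinatorics -/

lemma initSeg_refl (σ : Finset ℕ) : InitSeg σ σ :=
  ⟨subset_rfl, fun _ _ b hb _ => hb⟩

lemma initSeg_trans {σ τ ρ : Finset ℕ} (h1 : InitSeg σ τ) (h2 : InitSeg τ ρ) :
    InitSeg σ ρ := by
  refine ⟨h1.1.trans h2.1, fun a ha b hb hba => ?_⟩
  exact h1.2 a ha b (h2.2 a (h1.1 ha) b hb hba) hba

lemma initSeg_card_le {σ τ : Finset ℕ} (h : InitSeg σ τ) : σ.card ≤ τ.card :=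
  Finset.card_le_card h.1

lemma min'_eq_of_initSeg {π τ : Finset ℕ} (h : InitSeg π τ) (hπ : π.Nonempty) :
    π.min' hπ = τ.min' (hπ.mono h.1) := by
  have hτ : τ.Nonempty := hπ.mono h.1
  have h1 : τ.min' hτ ∈ π :=
    h.2 _ (π.min'_mem hπ) _ (τ.min'_mem hτ) (τ.min'_le _ (h.1 (π.min'_mem hπ)))
  exact le_antisymm (π.min'_le _ h1) (τ.min'_le _ (h.1 (π.min'_mem hπ)))

lemma initSeg_erase_max {τ : Finset ℕ} (hτ : τ.Nonempty) :
    InitSeg (τ.erase (τ.max' hτ)) τ := by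
  refine ⟨Finset.erase_subset _ _, fun a ha b hb hba => ?_⟩
  rw [Finset.mem_erase] at ha ⊢
  refine ⟨fun hbm => ?_, hb⟩
  subst hbm
  exact ha.1 (le_antisymm (τ.le_max' _ ha.2) hba)

lemma initSeg_erase_of_ne {π τ : Finset ℕ} (h : InitSeg π τ) (hne : π ≠ τ)
    (hτ : τ.Nonempty) : InitSeg π (τ.erase (τ.max' hτ)) := by
  refine ⟨fun x hx => Finset.mem_erase.mpr ⟨fun hxm => ?_, h.1 hx⟩,
    fun a ha b hb hba => h.2 a ha b (Finset.mem_erase.mp hb).2 hba⟩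
  subst hxm
  exact hne (le_antisymm h.1 (fun b hb => h.2 _ hx _ hb (τ.le_max' _ hb)))

lemma eq_erase_max_of_initSeg_card {π τ : Finset ℕ} (h : InitSeg π τ)
    (hc : π.card + 1 = τ.card) (hτ : τ.Nonempty) :
    π = τ.erase (τ.max' hτ) := by
  have hne : π ≠ τ := by intro he; subst he; omega
  have h2 := initSeg_erase_of_ne h hne hτ
  refine Finset.eq_of_subset_of_card_le h2.1 ?_
  rw [Finset.card_erase_of_mem (τ.max'_mem hτ)]
  omega

/-- Two initial segments of the same set are comparable: the smaller is
an initial segment of the larger. -/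
lemma initSeg_of_initSeg_card {a b τ : Finset ℕ} (ha : InitSeg a τ)
    (hb : InitSeg b τ) (hc : a.card ≤ b.card) : InitSeg a b := by
  have hsub : a ⊆ b := by
    intro x hx
    by_contra hxb
    have hba : b ⊆ a := by
      intro y hy
      have hyx : y ≤ x := by
        by_contra hyx
        exact hxb (hb.2 y hy x (ha.1 hx) (le_of_not_ge hyx))
      exact ha.2 x hx y (hb.1 hy) hyx
    have : b.card < a.card := Finset.card_lt_card ⟨hba, fun hab => hxb (hab hx)⟩
    omega
  exact ⟨hsub, fun x hx y hy hyx => ha.2 x hx y (hb.1 hy) hyx⟩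

lemma exists_initSeg_card {τ : Finset ℕ} :
    ∀ l, l ≤ τ.card → ∃ π, InitSeg π τ ∧ π.card = l := by
  intro l hl
  induction' hd : τ.card - l with d IH generalizing l
  · exact ⟨τ, initSeg_refl τ, by omega⟩
  · obtain ⟨π, hπ, hπc⟩ := IH (l + 1) (by omega) (by omega)
    have hπne : π.Nonempty := Finset.card_pos.mp (by omega)
    exact ⟨π.erase (π.max' hπne),
      initSeg_trans (initSeg_erase_max hπne) hπ,
      by rw [Finset.card_erase_of_mem (π.max'_mem hπne)]; omega⟩

lemma initSeg_min_singleton {τ : Finset ℕ} (hτ : τ.Nonempty) :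
    InitSeg {τ.min' hτ} τ := by
  refine ⟨Finset.singleton_subset_iff.mpr (τ.min'_mem hτ), fun a ha b hb hba => ?_⟩
  rw [Finset.mem_singleton] at ha ⊢
  subst ha
  exact le_antisymm hba (τ.min'_le _ hb)

/-! #### The walk and badness-preserving choices -/

variable {Q : Type u} [Preorder Q]

open scoped Classical in
/-- Choose a member of `sup h` which is bad against every member of the target. -/
noncomputable def pick (h : ℕ → Vdot Q) : Vdot Q → ℕ
  | .up _ => 0
  | .sup g => if hj : ∃ j, ∀ k, ¬ Vdot.vle (h j) (g k) then hj.choose else 0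

/-- One step of the walk. -/
noncomputable def Vdot.child : Vdot Q → Vdot Q → Vdot Q
  | .up q, _ => .up q
  | .sup h, t => h (pick h t)

lemma pick_spec {h g : ℕ → Vdot Q} (hj : ∃ j, ∀ k, ¬ Vdot.vle (h j) (g k)) :
    ∀ k, ¬ Vdot.vle (h (pick h (Vdot.sup g))) (g k) := by
  classical
  have he : pick h (Vdot.sup g)
      = if hj : ∃ j, ∀ k, ¬ Vdot.vle (h j) (g k) then hj.choose else 0 := rfl
  rw [he, dif_pos hj]
  exact hj.choose_spec


/-- The walk along a finite set. -/
noncomputable def walk (f : ℕ → Vdot Q) (σ : Finset ℕ) : Vdot Q :=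
  if h : 2 ≤ σ.card then
    Vdot.child (walk f (σ.erase (σ.max' (Finset.card_pos.mp (by omega)))))
      (walk f (σ.erase (σ.min' (Finset.card_pos.mp (by omega)))))
  else
    if hne : σ.Nonempty then f (σ.min' hne) else f 0
termination_by σ.card
decreasing_by
  · exact Finset.card_erase_lt_of_mem (Finset.max'_mem _ _)
  · exact Finset.card_erase_lt_of_mem (Finset.min'_mem _ _)

lemma walk_eq_one {f : ℕ → Vdot Q} {σ : Finset ℕ} (hne : σ.Nonempty)
    (h1 : σ.card < 2) : walk f σ = f (σ.min' hne) := by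
  rw [walk, dif_neg (by omega), dif_pos hne]

lemma walk_eq_two {f : ℕ → Vdot Q} {σ : Finset ℕ} (h2 : 2 ≤ σ.card)
    (hne : σ.Nonempty) :
    walk f σ = Vdot.child (walk f (σ.erase (σ.max' hne)))
      (walk f (σ.erase (σ.min' hne))) := by
  rw [walk, dif_pos h2]

lemma not_isUr_iff (x : Vdot Q) : ¬ x.IsUr ↔ ∃ g, x = Vdot.sup g := by
  cases x <;> simp [Vdot.IsUr]

/-- `≲` is preserved when passing from a member to the whole set. -/
lemma vle_sup_of_vle : ∀ (x : Vdot Q) (g : ℕ → Vdot Q) (j : ℕ),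
    Vdot.vle x (g j) → Vdot.vle x (Vdot.sup g)
  | .up p, g, j, h => ⟨j, h⟩
  | .sup h', g, j, hv => by
    cases hgj : g j with
    | up q => rw [hgj] at hv; exact absurd hv (by simp [Vdot.vle])
    | sup g'' =>
      rw [hgj] at hv
      intro i
      obtain ⟨k, hk⟩ := hv i
      exact ⟨j, by rw [hgj]; exact vle_sup_of_vle (h' i) g'' k hk⟩

lemma vle_of_vle_child {x p t : Vdot Q} (h : Vdot.vle x (Vdot.child p t)) :
    Vdot.vle x p := by
  cases p with
  | up q => exact h
  | sup hh => exact vle_sup_of_vle _ _ _ h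

lemma vle_walk_erase_max {f : ℕ → Vdot Q} {σ : Finset ℕ} (h2 : 2 ≤ σ.card)
    (hne : σ.Nonempty) {x : Vdot Q} (h : Vdot.vle x (walk f σ)) :
    Vdot.vle x (walk f (σ.erase (σ.max' hne))) := by
  rw [walk_eq_two h2 hne] at h
  exact vle_of_vle_child h

lemma vle_walk_initSeg {f : ℕ → Vdot Q} : ∀ (n : ℕ) (τ π : Finset ℕ), τ.card ≤ n →
    InitSeg π τ → π.Nonempty → ∀ x, Vdot.vle x (walk f τ) → Vdot.vle x (walk f π) := by
  intro n
  induction n with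
  | zero =>
    intro τ π hn hseg hπ x h
    have : τ = ∅ := Finset.card_eq_zero.mp (by omega)
    subst this
    obtain ⟨a, ha⟩ := hπ
    exact absurd (hseg.1 ha) (by simp)
  | succ n IH =>
    intro τ π hn hseg hπ x h
    by_cases heq : π = τ
    · subst heq; exact h
    · have hτ : τ.Nonempty := hπ.mono hseg.1
      have h2 : 2 ≤ τ.card := by
        have := Finset.card_lt_card (Finset.ssubset_iff_subset_ne.mpr ⟨hseg.1, heq⟩)
        have := Finset.card_pos.mpr hπ
        omega
      have hstep := vle_walk_erase_max h2 hτ h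
      refine IH (τ.erase (τ.max' hτ)) π ?_ (initSeg_erase_of_ne hseg heq hτ) hπ x hstep
      rw [Finset.card_erase_of_mem (τ.max'_mem hτ)]
      omega

/-- "All proper nonempty initial segments walk to sets." -/
def Sups (f : ℕ → Vdot Q) (σ : Finset ℕ) : Prop :=
  ∀ π, InitSeg π σ → π ≠ σ → π.Nonempty → ¬ (walk f π).IsUr

/-- The key lemma: badness of the walk. -/
lemma main_bad {f : ℕ → Vdot Q} (hbad : ∀ i j, i < j → ¬ Vdot.vle (f i) (f j)) :
    ∀ (n : ℕ) (σ τ : Finset ℕ), σ.card = n → τ.card = n →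
    ∀ (hσ : σ.Nonempty) (hτ : τ.Nonempty), σ.min' hσ < τ.min' hτ →
    InitSeg (σ.erase (σ.min' hσ)) τ → Sups f σ → Sups f τ →
    ¬ Vdot.vle (walk f σ) (walk f τ) := by
  intro n
  induction n using Nat.strong_induction_on with
  | _ n IH =>
    intro σ τ hcs hct hσ hτ hlt hseg Sσ Sτ
    have hn1 : 1 ≤ n := by
      have := Finset.card_pos.mpr hσ; omega
    by_cases hn2 : n < 2
    · -- base case: singletons
      rw [walk_eq_one hσ (by omega), walk_eq_one hτ (by omega)]
      exact hbad _ _ hlt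
    · -- inductive step
      push_neg at hn2
      have hcρ : (σ.erase (σ.max' hσ)).card = n - 1 := by
        rw [Finset.card_erase_of_mem (σ.max'_mem hσ), hcs]
      have hcρτ : (τ.erase (τ.max' hτ)).card = n - 1 := by
        rw [Finset.card_erase_of_mem (τ.max'_mem hτ), hct]
      have hρne : (σ.erase (σ.max' hσ)).Nonempty := Finset.card_pos.mp (by omega)
      have hρτne : (τ.erase (τ.max' hτ)).Nonempty := Finset.card_pos.mp (by omega)
      have hE1 : σ.erase (σ.min' hσ) = τ.erase (τ.max' hτ) := by
        refine eq_erase_max_of_initSeg_card hseg ?_ hτ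
        rw [Finset.card_erase_of_mem (σ.min'_mem hσ), hcs, hct]
        omega
      have hρσ : InitSeg (σ.erase (σ.max' hσ)) σ := initSeg_erase_max hσ
      have hρττ : InitSeg (τ.erase (τ.max' hτ)) τ := initSeg_erase_max hτ
      have hρneσ : σ.erase (σ.max' hσ) ≠ σ := by
        intro he; rw [he, hcs] at hcρ; omega
      have hρτneτ : τ.erase (τ.max' hτ) ≠ τ := by
        intro he; rw [he, hct] at hcρτ; omega
      have hminρ : (σ.erase (σ.max' hσ)).min' hρne = σ.min' hσ :=
        min'_eq_of_initSeg hρσ hρne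
      have hminρτ : (τ.erase (τ.max' hτ)).min' hρτne = τ.min' hτ :=
        min'_eq_of_initSeg hρττ hρτne
      have hseg' : InitSeg ((σ.erase (σ.max' hσ)).erase
          ((σ.erase (σ.max' hσ)).min' hρne)) (τ.erase (τ.max' hτ)) := by
        rw [hminρ, ← hE1]
        constructor
        · intro x hx
          simp only [Finset.mem_erase] at hx ⊢
          exact ⟨hx.1, hx.2.2⟩
        · intro a ha b hb hba
          simp only [Finset.mem_erase] at ha hb ⊢
          refine ⟨hb.1, fun hbM => ?_, hb.2⟩
          subst hbM
          exact ha.2.1 (le_antisymm (σ.le_max' _ ha.2.2) hba)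
      have Sρ : Sups f (σ.erase (σ.max' hσ)) := by
        intro π hπ hπne hπne2
        refine Sσ π (initSeg_trans hπ hρσ) ?_ hπne2
        intro he
        have := initSeg_card_le hπ
        rw [he, hcs] at this
        omega
      have Sρτ : Sups f (τ.erase (τ.max' hτ)) := by
        intro π hπ hπne hπne2
        refine Sτ π (initSeg_trans hπ hρττ) ?_ hπne2
        intro he
        have := initSeg_card_le hπ
        rw [he, hct] at this
        omega
      have HIH := IH (n - 1) (by omega) _ _ hcρ hcρτ hρne hρτne
        (by rw [hminρ, hminρτ]; exact hlt) hseg' Sρ Sρτ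
      obtain ⟨h, hh⟩ := (not_isUr_iff _).mp (Sσ _ hρσ hρneσ hρne)
      obtain ⟨g, hg⟩ := (not_isUr_iff _).mp (Sτ _ hρττ hρτneτ hρτne)
      rw [hh, hg] at HIH
      have HIH' : ∃ j, ∀ k, ¬ Vdot.vle (h j) (g k) := by
        by_contra hc
        push_neg at hc
        exact HIH (fun i => hc i)
      have hwσ : walk f σ = h (pick h (Vdot.sup g)) := by
        rw [walk_eq_two (by omega) hσ, hh, hE1, hg]; rfl
      have hwτ : ∃ j', walk f τ = g j' := by
        rw [walk_eq_two (by omega) hτ, hg]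
        exact ⟨_, rfl⟩
      obtain ⟨j', hj'⟩ := hwτ
      rw [hwσ, hj']
      exact pick_spec HIH' j'

/-! #### Ranks along the walk -/

lemma rk_lt_of_mem {h : ℕ → Vdot Q} (j : ℕ) (hs : ¬ (h j).IsUr) :
    Vdot.rk (h j) < Vdot.rk (Vdot.sup h) := by
  obtain ⟨g, hg⟩ := (not_isUr_iff _).mp hs
  have h1 : Vdot.rkp (h j) ≤ ⨆ n, Vdot.rkp (h n) :=
    le_ciSup (Ordinal.bddAbove_range _) j
  have h2 : Vdot.rk (h j) < Vdot.rkp (h j) := by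
    rw [hg]
    show (⨆ n, Vdot.rkp (g n)) < (⨆ n, Vdot.rkp (g n)) + 1
    rw [Ordinal.add_one_eq_succ]
    exact Order.lt_succ _
  exact lt_of_lt_of_le h2 h1

lemma rk_step {f : ℕ → Vdot Q} {σ : Finset ℕ} (h2 : 2 ≤ σ.card) (hne : σ.Nonempty)
    (hρ : ¬ (walk f (σ.erase (σ.max' hne))).IsUr) (hτ : ¬ (walk f σ).IsUr) :
    Vdot.rk (walk f σ) < Vdot.rk (walk f (σ.erase (σ.max' hne))) := by
  obtain ⟨h, hh⟩ := (not_isUr_iff _).mp hρ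
  have he : walk f σ = h (pick h (walk f (σ.erase (σ.min' hne)))) := by
    rw [walk_eq_two h2 hne, hh]; rfl
  rw [he] at hτ ⊢
  rw [hh]
  exact rk_lt_of_mem _ hτ

lemma rk_chain {f : ℕ → Vdot Q} : ∀ (n : ℕ) (τ π : Finset ℕ), τ.card ≤ n →
    InitSeg π τ → π.Nonempty → π ≠ τ →
    (∀ ψ, InitSeg ψ τ → ψ.Nonempty → ¬ (walk f ψ).IsUr) →
    Vdot.rk (walk f τ) < Vdot.rk (walk f π) := by
  intro n
  induction n with
  | zero =>
    intro τ π hn hseg hπ hne _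
    have : τ = ∅ := Finset.card_eq_zero.mp (by omega)
    subst this
    obtain ⟨a, ha⟩ := hπ
    exact absurd (hseg.1 ha) (by simp)
  | succ n IH =>
    intro τ π hn hseg hπ hne Hsup
    have hτ : τ.Nonempty := hπ.mono hseg.1
    have h2 : 2 ≤ τ.card := by
      have := Finset.card_lt_card (Finset.ssubset_iff_subset_ne.mpr ⟨hseg.1, hne⟩)
      have := Finset.card_pos.mpr hπ
      omega
    have hρne : (τ.erase (τ.max' hτ)).Nonempty := by
      rw [← Finset.card_pos, Finset.card_erase_of_mem (τ.max'_mem hτ)]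
      omega
    have hstep := rk_step h2 hτ (Hsup _ (initSeg_erase_max hτ) hρne)
      (Hsup τ (initSeg_refl τ) hτ)
    by_cases heq : π = τ.erase (τ.max' hτ)
    · rw [heq]; exact hstep
    · refine hstep.trans (IH (τ.erase (τ.max' hτ)) π ?_
        (initSeg_erase_of_ne hseg hne hτ) hπ heq ?_)
      · rw [Finset.card_erase_of_mem (τ.max'_mem hτ)]; omega
      · intro ψ hψ hψne
        exact Hsup ψ (initSeg_trans hψ (initSeg_erase_max hτ)) hψne

/-! #### Enumeration of infinite subsets of ℕ -/

noncomputable def segOf (X : Set ℕ) (k : ℕ) : Finset ℕ :=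
  (Finset.range (k + 1)).image (Nat.nth (· ∈ X))

section SegOf

variable {X : Set ℕ}

private lemma hX' (hX : X.Infinite) : {n | n ∈ X}.Infinite := hX

lemma nth_strict (hX : X.Infinite) : StrictMono (Nat.nth (· ∈ X)) :=
  Nat.nth_strictMono (hX' hX)

lemma nth_mem (hX : X.Infinite) (i : ℕ) : Nat.nth (· ∈ X) i ∈ X :=
  Nat.nth_mem_of_infinite (hX' hX) i

lemma nth_surj (hX : X.Infinite) {b : ℕ} (hb : b ∈ X) :
    ∃ i, Nat.nth (· ∈ X) i = b := by
  have h := Nat.range_nth_of_infinite (hX' hX)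
  have hb2 : b ∈ {n | n ∈ X} := hb
  rw [← h] at hb2
  exact hb2

lemma mem_segOf {a k : ℕ} : a ∈ segOf X k ↔ ∃ i ≤ k, Nat.nth (· ∈ X) i = a := by
  simp [segOf, Finset.mem_image, Finset.mem_range, Nat.lt_succ_iff]

lemma segOf_card (hX : X.Infinite) (k : ℕ) : (segOf X k).card = k + 1 := by
  rw [segOf, Finset.card_image_of_injective _ (nth_strict hX).injective,
    Finset.card_range]

lemma segOf_nonempty (hX : X.Infinite) (k : ℕ) : (segOf X k).Nonempty :=
  Finset.card_pos.mp (by rw [segOf_card hX]; omega)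

lemma segOf_initSegSet (hX : X.Infinite) (k : ℕ) : InitSegSet (segOf X k) X := by
  constructor
  · intro a ha
    obtain ⟨i, _, hia⟩ := mem_segOf.mp ha
    rw [← hia]
    exact nth_mem hX i
  · intro a ha b hb hba
    obtain ⟨i, hik, hia⟩ := mem_segOf.mp ha
    obtain ⟨j, hj⟩ := nth_surj hX hb
    refine mem_segOf.mpr ⟨j, ?_, hj⟩
    have : j ≤ i := by
      rw [← (nth_strict hX).le_iff_le]
      rw [hj, hia]
      exact hba
    omega

lemma segOf_initSeg (hX : X.Infinite) {i k : ℕ} (hik : i ≤ k) :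
    InitSeg (segOf X i) (segOf X k) := by
  constructor
  · intro a ha
    obtain ⟨i', hi', ha'⟩ := mem_segOf.mp ha
    exact mem_segOf.mpr ⟨i', by omega, ha'⟩
  · intro a ha b hb hba
    obtain ⟨i', hi', ha'⟩ := mem_segOf.mp ha
    obtain ⟨j, hj, hb'⟩ := mem_segOf.mp hb
    refine mem_segOf.mpr ⟨j, ?_, hb'⟩
    have hle : Nat.nth (· ∈ X) j ≤ Nat.nth (· ∈ X) i' := by
      rw [hb', ha']; exact hba
    have : j ≤ i' := (nth_strict hX).le_iff_le.mp hle
    omega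

lemma segOf_max' (hX : X.Infinite) (k : ℕ) :
    (segOf X k).max' (segOf_nonempty hX k) = Nat.nth (· ∈ X) k := by
  refine le_antisymm (Finset.max'_le _ _ _ ?_)
    (Finset.le_max' _ _ (mem_segOf.mpr ⟨k, le_rfl, rfl⟩))
  intro y hy
  obtain ⟨i, hik, hiy⟩ := mem_segOf.mp hy
  rw [← hiy]
  exact (nth_strict hX).monotone hik

lemma segOf_erase_max (hX : X.Infinite) (k : ℕ) :
    (segOf X (k + 1)).erase ((segOf X (k + 1)).max' (segOf_nonempty hX (k + 1)))
      = segOf X k := by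
  rw [segOf_max' hX (k + 1)]
  ext x
  rw [Finset.mem_erase, mem_segOf, mem_segOf]
  constructor
  · rintro ⟨hne, i, hik, hix⟩
    refine ⟨i, ?_, hix⟩
    rcases Nat.lt_or_ge i (k + 1) with h | h
    · omega
    · exfalso; apply hne; rw [← hix]; congr 1; omega
  · rintro ⟨i, hik, hix⟩
    refine ⟨?_, i, by omega, hix⟩
    intro he
    have : i = k + 1 := (nth_strict hX).injective (by rw [hix, he])
    omega

lemma initSeg_segOf_eq (hX : X.Infinite) {π : Finset ℕ} {k : ℕ} (hπ : InitSeg π (segOf X k))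
    (hne : π.Nonempty) : π = segOf X (π.card - 1) := by
  have hc1 : 1 ≤ π.card := Finset.card_pos.mpr hne
  have hc : π.card ≤ k + 1 := by
    have := initSeg_card_le hπ
    rwa [segOf_card hX] at this
  have h1 : InitSeg (segOf X (π.card - 1)) (segOf X k) := segOf_initSeg hX (by omega)
  have hcs : (segOf X (π.card - 1)).card = π.card := by
    rw [segOf_card hX]; omega
  have h2 : InitSeg π (segOf X (π.card - 1)) :=
    initSeg_of_initSeg_card hπ h1 (by omega)
  have h3 : InitSeg (segOf X (π.card - 1)) π :=
    initSeg_of_initSeg_card h1 hπ (by omega)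
  exact Finset.Subset.antisymm h2.1 h3.1

end SegOf

/-! #### The front associated with a bad sequence -/

def FrSet (f : ℕ → Vdot Q) : Set (Finset ℕ) :=
  {σ | σ.Nonempty ∧ (walk f σ).IsUr ∧ Sups f σ}

lemma exists_isUr_walk_segOf (f : ℕ → Vdot Q) (X : Set ℕ) (hX : X.Infinite) :
    ∃ k, (walk f (segOf X k)).IsUr := by
  by_contra hc
  push_neg at hc
  have hdec : ∀ k, Vdot.rk (walk f (segOf X (k + 1))) < Vdot.rk (walk f (segOf X k)) := by
    intro k
    have h2 : 2 ≤ (segOf X (k + 1)).card := by rw [segOf_card hX]; omega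
    have hρ : ¬ (walk f ((segOf X (k+1)).erase
        ((segOf X (k+1)).max' (segOf_nonempty hX (k+1))))).IsUr := by
      rw [segOf_erase_max hX k]; exact hc k
    have := rk_step h2 (segOf_nonempty hX (k + 1)) hρ (hc (k + 1))
    rwa [segOf_erase_max hX k] at this
  have hw : WellFounded ((· < ·) : Ordinal.{0} → Ordinal.{0} → Prop) := wellFounded_lt
  set u : ℕ → Ordinal.{0} := fun k => Vdot.rk (walk f (segOf X k)) with hu
  have hne : (Set.range u).Nonempty := ⟨u 0, 0, rfl⟩
  obtain ⟨n, hn⟩ := hw.min_mem (Set.range u) hne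
  exact hw.not_lt_min (Set.range u) ⟨n + 1, rfl⟩ (hn ▸ hdec n)

lemma frSet_of_infinite (f : ℕ → Vdot Q) {X : Set ℕ} (hX : X.Infinite) :
    ∃ σ ∈ FrSet f, InitSegSet σ X := by
  classical
  have hex := exists_isUr_walk_segOf f X hX
  refine ⟨segOf X (Nat.find hex), ⟨segOf_nonempty hX _, Nat.find_spec hex, ?_⟩,
    segOf_initSegSet hX _⟩
  intro π hπ hπne hπne2
  have hπeq := initSeg_segOf_eq hX hπ hπne2
  have hclt : π.card < Nat.find hex + 1 := by
    have h1 := Finset.card_lt_card (Finset.ssubset_iff_subset_ne.mpr ⟨hπ.1, hπne⟩)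
    rwa [segOf_card hX] at h1
  rw [hπeq]
  exact Nat.find_min hex (by have := Finset.card_pos.mpr hπne2; omega)

/-- Extract an urelement from any element of `V̇(Q)`. -/
def Vdot.first : Vdot Q → Q
  | .up q => q
  | .sup h => (h 0).first

end Statement3Aux
theorem statement3 {Q : Type u} [Preorder Q] (α : Ordinal.{0})
    (f : ℕ → Vdot Q) (hmem : ∀ i, Vdot.memV α (f i))
    (hbad : ∀ i j, i < j → ¬ Vdot.vle (f i) (f j)) :
    ∃ (Fr : Front) (g : Finset ℕ → Q × ℕ), Fr.rank ≤ α ∧ BadArray Fr g := by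
  classical
  refine ⟨⟨FrSet f, ?_, ?_, ?_, fun σ => if σ = ∅ then α else Vdot.rk (walk f σ), ?_⟩,
    fun σ => ((walk f σ).first, σ.card), ?_, ?_⟩
  · -- infinite
    have hch : ∀ n : ℕ, ∃ σ, σ ∈ FrSet f ∧ InitSegSet σ (Set.Ici n) := by
      intro n
      obtain ⟨σ, h1, h2⟩ := frSet_of_infinite f (Set.Ici_infinite n)
      exact ⟨σ, h1, h2⟩
    choose F hF1 hF2 using hch
    have hmin : ∀ n, (F n).min' (hF1 n).1 = n := by
      intro n
      have hn : n ∈ F n := by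
        refine (hF2 n).2 _ ((F n).min'_mem (hF1 n).1) n ?_ ?_
        · exact Set.self_mem_Ici
        · exact (hF2 n).1 ((F n).min'_mem (hF1 n).1)
      refine le_antisymm ((F n).min'_le _ hn) ?_
      exact (hF2 n).1 ((F n).min'_mem (hF1 n).1)
    refine Set.infinite_of_injective_forall_mem (f := F) ?_ (fun n => hF1 n)
    intro a b hab
    rw [← hmin a, ← hmin b]
    congr 1
  · -- antichain
    intro σ hσ τ hτ hseg
    by_contra hne
    exact hτ.2.2 σ hseg hne hσ.1 hσ.2.1
  · -- covers
    intro X hX _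
    exact frSet_of_infinite f hX
  · -- rk_strict
    intro σ τ hσt hτt hst hne
    obtain ⟨ρ2, hρ2, hτρ2, hτρ2ne⟩ := hτt
    have hτne : τ ≠ ∅ := by
      rintro rfl
      exact hne (Finset.subset_empty.mp hst.1)
    have hτnonempty : τ.Nonempty := Finset.nonempty_iff_ne_empty.mpr hτne
    have hcardlt : τ.card < ρ2.card :=
      Finset.card_lt_card (Finset.ssubset_iff_subset_ne.mpr ⟨hτρ2.1, hτρ2ne⟩)
    have Hsup : ∀ ψ, InitSeg ψ τ → ψ.Nonempty → ¬ (walk f ψ).IsUr := by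
      intro ψ hψ hψne
      refine hρ2.2.2 ψ (initSeg_trans hψ hτρ2) ?_ hψne
      intro he
      have := initSeg_card_le hψ
      rw [he] at this
      omega
    simp only [if_neg hτne]
    by_cases hσe : σ = ∅
    · subst hσe
      rw [if_pos rfl]
      have h1 : InitSeg {τ.min' hτnonempty} τ := initSeg_min_singleton hτnonempty
      have hw : walk f {τ.min' hτnonempty} = f (τ.min' hτnonempty) := by
        rw [walk_eq_one (Finset.singleton_nonempty _) (by simp), Finset.min'_singleton]
      have hα : Vdot.rk (f (τ.min' hτnonempty)) < α := by
        rcases hmem (τ.min' hτnonempty) with hur | hlt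
        · exact absurd (hw ▸ hur) (Hsup _ h1 (Finset.singleton_nonempty _))
        · exact hlt
      by_cases hτs : τ = {τ.min' hτnonempty}
      · rw [hτs, hw]
        exact hα
      · have := rk_chain τ.card τ {τ.min' hτnonempty} le_rfl h1
          (Finset.singleton_nonempty _) (fun he => hτs he.symm) Hsup
        rw [hw] at this
        exact this.trans hα
    · rw [if_neg hσe]
      exact rk_chain τ.card τ σ le_rfl hst
        (Finset.nonempty_iff_ne_empty.mpr hσe) hne Hsup
  · -- rank ≤ α
    simp [Front.rank]
  · -- bad array
    intro σ hσF τ hτF htri hle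
    obtain ⟨hσne, hτne, hminlt, hcomp⟩ := htri
    obtain ⟨qσ, hqσ⟩ := hσF.2.1
    obtain ⟨qτ, hqτ⟩ := hτF.2.1
    rw [Prod.mk_le_mk] at hle
    obtain ⟨hq, hcard⟩ := hle
    have hvle : Vdot.vle (walk f σ) (walk f τ) := by
      rw [hqσ, hqτ]
      show qσ ≤ qτ
      rw [hqσ, hqτ] at hq
      simpa [Vdot.first] using hq
    by_cases h1 : σ.card < 2
    · have hπ : InitSeg {τ.min' hτne} τ := initSeg_min_singleton hτne
      have h2 := vle_walk_initSeg τ.card τ _ le_rfl hπ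
        (Finset.singleton_nonempty _) _ hvle
      rw [walk_eq_one hσne h1] at h2
      rw [walk_eq_one (Finset.singleton_nonempty _) (by simp),
        Finset.min'_singleton] at h2
      exact hbad _ _ hminlt h2
    · push_neg at h1
      have hcσ' : (σ.erase (σ.min' hσne)).card = σ.card - 1 :=
        Finset.card_erase_of_mem (σ.min'_mem hσne)
      have hseg : InitSeg (σ.erase (σ.min' hσne)) τ := by
        rcases hcomp with h | h
        · exact h
        · exfalso
          have := initSeg_card_le h
          omega
      obtain ⟨π, hπτ, hπc⟩ := exists_initSeg_card σ.card hcard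
      have hπne : π.Nonempty := Finset.card_pos.mp (by omega)
      have hminlt' : σ.min' hσne < π.min' hπne := by
        rw [min'_eq_of_initSeg hπτ hπne]
        exact hminlt
      have hsegπ : InitSeg (σ.erase (σ.min' hσne)) π :=
        initSeg_of_initSeg_card hseg hπτ (by omega)
      have Sπ : Sups f π := by
        intro ψ hψ hψne hψne2
        refine hτF.2.2 ψ (initSeg_trans hψ hπτ) ?_ hψne2
        intro he
        have hlt2 : ψ.card < π.card :=
          Finset.card_lt_card (Finset.ssubset_iff_subset_ne.mpr ⟨hψ.1, hψne⟩)
        rw [he] at hlt2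
        omega
      have hmain := main_bad hbad σ.card σ π rfl hπc hσne hπne hminlt' hsegπ
        hσF.2.2 Sπ
      exact hmain (vle_walk_initSeg τ.card τ π le_rfl hπτ hπne _ hvle)
end

section
/- Let Q be a quasi-order and α an ordinal. If g : F → Q is a bad array whose front has rank ≤ α, then there is a bad sequence f : ℕ → V̇_α(Q) with respect to the relation ≲*. -/
open Ordinal

universe u

/-! ### Auxiliary development for Statement 5 -/

namespace S5

open Classical

/-! #### Basic `InitSeg` lemmas -/

theorem initSeg_refl (σ : Finset ℕ) : InitSeg σ σ :=
  ⟨subset_rfl, fun _ _ b hb _ => hb⟩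

theorem initSeg_trans {σ τ ρ : Finset ℕ} (h1 : InitSeg σ τ) (h2 : InitSeg τ ρ) :
    InitSeg σ ρ :=
  ⟨h1.1.trans h2.1, fun a ha b hb hba => h1.2 a ha b (h2.2 a (h1.1 ha) b hb hba) hba⟩

theorem initSeg_antisymm {σ τ : Finset ℕ} (h1 : InitSeg σ τ) (h2 : InitSeg τ σ) : σ = τ :=
  Finset.Subset.antisymm h1.1 h2.1

theorem initSeg_empty (τ : Finset ℕ) : InitSeg ∅ τ :=
  ⟨Finset.empty_subset _, by simp⟩

theorem initSeg_insert {σ : Finset ℕ} {n : ℕ} (h : ∀ a ∈ σ, a < n) :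
    InitSeg σ (insert n σ) := by
  refine ⟨Finset.subset_insert _ _, fun a ha b hb hba => ?_⟩
  rcases Finset.mem_insert.1 hb with rfl | hb
  · exact absurd hba (not_le.mpr (h a ha))
  · exact hb

theorem initSeg_min'_eq {σ τ : Finset ℕ} (h : InitSeg σ τ) (hσ : σ.Nonempty) (hτ : τ.Nonempty) :
    τ.min' hτ = σ.min' hσ := by
  have h1 : τ.min' hτ ≤ σ.min' hσ := Finset.min'_le _ _ (h.1 (σ.min'_mem hσ))
  have h2 : τ.min' hτ ∈ σ := h.2 _ (σ.min'_mem hσ) _ (τ.min'_mem hτ) h1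
  exact le_antisymm h1 (Finset.min'_le _ _ h2)

theorem initSeg_erase_min {σ τ : Finset ℕ} (h : InitSeg σ τ) (m : ℕ) :
    InitSeg (σ.erase m) (τ.erase m) := by
  refine ⟨Finset.erase_subset_erase _ h.1, fun a ha b hb hba => ?_⟩
  exact Finset.mem_erase.2 ⟨(Finset.mem_erase.1 hb).1,
    h.2 a (Finset.mem_of_mem_erase ha) b (Finset.mem_of_mem_erase hb) hba⟩

theorem initSeg_erase_max {τ : Finset ℕ} (hτ : τ.Nonempty) :
    InitSeg (τ.erase (τ.max' hτ)) τ := by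
  refine ⟨Finset.erase_subset _ _, fun a ha b hb hba => Finset.mem_erase.2 ⟨?_, hb⟩⟩
  intro hbm
  subst hbm
  have h1 : a ≤ τ.max' hτ := Finset.le_max' τ a (Finset.mem_of_mem_erase ha)
  exact (Finset.mem_erase.1 ha).1 (le_antisymm h1 hba)

theorem initSegSet_comparable {σ τ : Finset ℕ} {X : Set ℕ}
    (h1 : InitSegSet σ X) (h2 : InitSegSet τ X) : InitSeg σ τ ∨ InitSeg τ σ := by
  have hsub : σ ⊆ τ ∨ τ ⊆ σ := by
    by_contra hc
    push_neg at hc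
    obtain ⟨a, ha, ha'⟩ := Finset.not_subset.1 hc.1
    obtain ⟨b, hb, hb'⟩ := Finset.not_subset.1 hc.2
    rcases le_total a b with hab | hab
    · exact ha' (h2.2 b hb a (h1.1 (Finset.mem_coe.2 ha)) hab)
    · exact hb' (h1.2 a ha b (h2.1 (Finset.mem_coe.2 hb)) hab)
  rcases hsub with hs | hs
  · exact Or.inl ⟨hs, fun a ha b hb hba => h1.2 a ha b (h2.1 (Finset.mem_coe.2 hb)) hba⟩
  · exact Or.inr ⟨hs, fun a ha b hb hba => h2.2 a ha b (h1.1 (Finset.mem_coe.2 hb)) hba⟩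

theorem initSeg_toSet {σ τ : Finset ℕ} (h : InitSeg σ τ) : InitSegSet σ ↑τ :=
  ⟨fun a ha => Finset.mem_coe.2 (h.1 (Finset.mem_coe.1 ha)),
    fun a ha b hb hba => h.2 a ha b (Finset.mem_coe.1 hb) hba⟩

/-! #### Front combinatorics -/

variable (Fr : Front)

/-- Proper initial segments of members of the front: the tree `T_F`. -/
def TF (σ : Finset ℕ) : Prop := ∃ ρ ∈ Fr.F, InitSeg σ ρ ∧ σ ≠ ρ

/-- Members of `F` together with the tree `T_F`. -/
def Good (σ : Finset ℕ) : Prop := σ ∈ Fr.F ∨ TF Fr σ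

/-- Valid one-point extensions of `σ`. -/
def D (σ : Finset ℕ) : Set ℕ := {n | n ∈ Fr.union ∧ ∀ a ∈ σ, a < n}

theorem mem_F_nonempty {σ : Finset ℕ} (h : σ ∈ Fr.F) : σ.Nonempty := by
  rcases Finset.eq_empty_or_nonempty σ with rfl | h'
  · exfalso
    have hsub : Fr.F ⊆ {∅} := by
      intro τ hτ
      have := Fr.antichain ∅ h τ hτ (initSeg_empty τ)
      simp [← this]
    exact Fr.infinite ((Set.finite_singleton _).subset hsub)
  · exact h'

theorem not_TF_of_mem_F {σ : Finset ℕ} (h : σ ∈ Fr.F) : ¬ TF Fr σ := by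
  rintro ⟨ρ, hρ, hIS, hne⟩
  exact hne (Fr.antichain σ h ρ hρ hIS)

theorem good_subset_U {σ : Finset ℕ} (h : Good Fr σ) : ∀ a ∈ σ, a ∈ Fr.union := by
  intro a ha
  rcases h with h | ⟨ρ, hρ, hIS, _⟩
  · exact ⟨σ, h, ha⟩
  · exact ⟨ρ, hρ, hIS.1 ha⟩

theorem U_infinite : Fr.union.Infinite := by
  by_contra hfin
  rw [Set.not_infinite] at hfin
  have hsub : Fr.F ⊆ (fun s : Finset ℕ => (↑s : Set ℕ)) ⁻¹' {b | b ⊆ Fr.union} := by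
    intro σ hσ n hn
    exact ⟨σ, hσ, Finset.mem_coe.1 hn⟩
  exact Fr.infinite (((hfin.finite_subsets).preimage
    (Set.injOn_of_injective Finset.coe_injective)).subset hsub)

theorem D_infinite (σ : Finset ℕ) : (D Fr σ).Infinite := by
  have h1 : (Fr.union \ Set.Iic (σ.sup id)).Infinite :=
    (U_infinite Fr).diff (Set.finite_Iic _)
  refine h1.mono ?_
  rintro n ⟨hn, hn2⟩
  refine ⟨hn, fun a ha => ?_⟩
  have h3 : a ≤ σ.sup id := Finset.le_sup (f := id) ha
  simp only [Set.mem_Iic, not_le] at hn2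
  omega

theorem cover_comparable {σ : Finset ℕ} (hne : σ.Nonempty) (hsub : ∀ a ∈ σ, a ∈ Fr.union) :
    ∃ ρ ∈ Fr.F, InitSeg ρ σ ∨ InitSeg σ ρ := by
  set X : Set ℕ := ↑σ ∪ D Fr σ with hX
  have hXinf : X.Infinite := (D_infinite Fr σ).mono Set.subset_union_right
  have hXU : X ⊆ {n | ∃ τ ∈ Fr.F, n ∈ τ} := by
    rintro n (hn | hn)
    · exact hsub n (Finset.mem_coe.1 hn)
    · exact hn.1
  obtain ⟨ρ, hρF, hρIS⟩ := Fr.covers X hXinf hXU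
  have hσIS : InitSegSet σ X := by
    constructor
    · exact Set.subset_union_left
    · intro a ha b hb hba
      rcases hb with hb | hb
      · exact Finset.mem_coe.1 hb
      · exact absurd hba (not_le.2 (hb.2 a ha))
  rcases initSegSet_comparable hρIS hσIS with h | h
  · exact ⟨ρ, hρF, Or.inl h⟩
  · exact ⟨ρ, hρF, Or.inr h⟩

theorem good_singleton {n : ℕ} (hn : n ∈ Fr.union) : Good Fr {n} := by
  obtain ⟨ρ, hρF, h | h⟩ := cover_comparable Fr (Finset.singleton_nonempty n)
    (by intro a ha; rw [Finset.mem_singleton] at ha; subst ha; exact hn)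
  · have hρ : ρ = {n} := by
      rcases Finset.subset_singleton_iff.1 h.1 with h0 | h0
      · exact absurd h0 (Finset.nonempty_iff_ne_empty.1 (mem_F_nonempty Fr hρF))
      · exact h0
    exact Or.inl (hρ ▸ hρF)
  · by_cases he : {n} = ρ
    · exact Or.inl (he ▸ hρF)
    · exact Or.inr ⟨ρ, hρF, h, he⟩

theorem good_insert {σ : Finset ℕ} (hσ : TF Fr σ) {e : ℕ} (he : e ∈ D Fr σ) :
    Good Fr (insert e σ) := by
  have hσU : ∀ a ∈ σ, a ∈ Fr.union := good_subset_U Fr (Or.inr hσ)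
  have hIσ : InitSeg σ (insert e σ) := initSeg_insert he.2
  obtain ⟨ρ, hρF, hcomp⟩ := cover_comparable Fr (Finset.insert_nonempty _ _)
    (by
      intro a ha
      rcases Finset.mem_insert.1 ha with rfl | ha
      · exact he.1
      · exact hσU a ha)
  rcases hcomp with h | h
  · -- `InitSeg ρ (insert e σ)`
    have hcomp2 : InitSeg ρ σ ∨ InitSeg σ ρ :=
      initSegSet_comparable (initSeg_toSet h) (initSeg_toSet hIσ)
    have hσρ : InitSeg σ ρ := by
      rcases hcomp2 with h2 | h2
      · exfalso
        obtain ⟨ρ', hρ', hIS', hne'⟩ := id hσ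
        have hee : ρ = ρ' := Fr.antichain ρ hρF ρ' hρ' (initSeg_trans h2 hIS')
        subst hee
        have hσρeq : ρ = σ := initSeg_antisymm h2 hIS'
        exact not_TF_of_mem_F Fr (hσρeq ▸ hρF) hσ
      · exact h2
    have hneq : σ ≠ ρ := by
      rintro rfl
      exact not_TF_of_mem_F Fr hρF hσ
    have heρ : e ∈ ρ := by
      obtain ⟨y, hy, hy'⟩ :=
        Finset.exists_of_ssubset (Finset.ssubset_iff_subset_ne.2 ⟨hσρ.1, hneq⟩)
      rcases Finset.mem_insert.1 (h.1 hy) with rfl | hc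
      · exact hy
      · exact absurd hc hy'
    have heq : ρ = insert e σ :=
      Finset.Subset.antisymm h.1 (Finset.insert_subset heρ hσρ.1)
    exact Or.inl (heq ▸ hρF)
  · by_cases heq : insert e σ = ρ
    · exact Or.inl (heq ▸ hρF)
    · exact Or.inr ⟨ρ, hρF, h, heq⟩

/-! #### Children -/

noncomputable def dflt (σ : Finset ℕ) : ℕ := (D_infinite Fr σ).nonempty.choose

theorem dflt_mem (σ : Finset ℕ) : dflt Fr σ ∈ D Fr σ :=
  (D_infinite Fr σ).nonempty.choose_spec

noncomputable def ch (σ : Finset ℕ) (n : ℕ) : Finset ℕ :=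
  if n ∈ D Fr σ then insert n σ else insert (dflt Fr σ) σ

theorem ch_spec (σ : Finset ℕ) (n : ℕ) : ∃ m ∈ D Fr σ, ch Fr σ n = insert m σ := by
  unfold ch
  split
  · exact ⟨n, ‹_›, rfl⟩
  · exact ⟨dflt Fr σ, dflt_mem Fr σ, rfl⟩

theorem ch_of_mem {σ : Finset ℕ} {n : ℕ} (h : n ∈ D Fr σ) : ch Fr σ n = insert n σ :=
  if_pos h

theorem good_ch {σ : Finset ℕ} (hσ : TF Fr σ) (n : ℕ) : Good Fr (ch Fr σ n) := by
  obtain ⟨m, hm, he⟩ := ch_spec Fr σ n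
  rw [he]
  exact good_insert Fr hσ hm

theorem TF_rk_lt {σ τ : Finset ℕ} (hσ : TF Fr σ) (hτ : TF Fr τ) (h : InitSeg σ τ)
    (hne : σ ≠ τ) : Fr.rk τ < Fr.rk σ :=
  Fr.rk_strict σ τ hσ hτ h hne

theorem initSeg_ch (σ : Finset ℕ) (n : ℕ) : InitSeg σ (ch Fr σ n) := by
  obtain ⟨m, hm, he⟩ := ch_spec Fr σ n
  rw [he]
  exact initSeg_insert hm.2

theorem ne_ch (σ : Finset ℕ) (n : ℕ) : σ ≠ ch Fr σ n := by
  obtain ⟨m, hm, he⟩ := ch_spec Fr σ n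
  rw [he]
  intro hc
  have hmem : m ∈ σ := hc ▸ Finset.mem_insert_self m σ
  exact lt_irrefl m (hm.2 m hmem)

theorem rk_ch_lt {σ : Finset ℕ} (hσ : TF Fr σ) {n : ℕ} (h : TF Fr (ch Fr σ n)) :
    Fr.rk (ch Fr σ n) < Fr.rk σ :=
  TF_rk_lt Fr hσ h (initSeg_ch Fr σ n) (ne_ch Fr σ n)

/-! #### The map into `V̇(Q)` -/

noncomputable def G {Q : Type u} [Preorder Q] (Fr : Front) (g : Finset ℕ → Q)
    (σ : Finset ℕ) : Vdot Q :=
  if hσ : TF Fr σ then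
    Vdot.sup (fun n =>
      if _h : ch Fr σ n ∈ Fr.F then Vdot.up (g (ch Fr σ n)) else G Fr g (ch Fr σ n))
  else Vdot.up (g σ)
termination_by Fr.rk σ
decreasing_by
  have hσ' : TF Fr σ := by assumption
  have hF' : ¬ ch Fr σ n ∈ Fr.F := by assumption
  exact rk_ch_lt Fr hσ' (Or.resolve_left (good_ch Fr hσ' n) hF')

theorem G_not_TF {Q : Type u} [Preorder Q] (Fr : Front) (g : Finset ℕ → Q)
    {σ : Finset ℕ} (h : ¬ TF Fr σ) : G Fr g σ = Vdot.up (g σ) := by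
  rw [G]
  exact dif_neg h

theorem G_F {Q : Type u} [Preorder Q] (Fr : Front) (g : Finset ℕ → Q)
    {σ : Finset ℕ} (h : σ ∈ Fr.F) : G Fr g σ = Vdot.up (g σ) :=
  G_not_TF Fr g (not_TF_of_mem_F Fr h)

theorem G_TF {Q : Type u} [Preorder Q] (Fr : Front) (g : Finset ℕ → Q)
    {σ : Finset ℕ} (h : TF Fr σ) :
    G Fr g σ = Vdot.sup (fun n => G Fr g (ch Fr σ n)) := by
  rw [G, dif_pos h]
  congr 1
  funext n
  split
  · exact (G_F Fr g ‹_›).symm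
  · rfl

/-! #### Unfolding lemmas for `vles` -/

theorem vles_up_iff {Q : Type u} [Preorder Q] {p : Q} {y : Vdot Q} :
    Vdot.vles (Vdot.up p) y ↔ Vdot.leUp p y := by
  cases y <;> rfl

theorem vles_sup_up_iff {Q : Type u} [Preorder Q] {f : ℕ → Vdot Q} {q : Q} :
    Vdot.vles (Vdot.sup f) (Vdot.up q) ↔ ∀ i, Vdot.vles (f i) (Vdot.up q) :=
  Iff.rfl

theorem vles_sup_sup_iff {Q : Type u} [Preorder Q] {f h : ℕ → Vdot Q} :
    Vdot.vles (Vdot.sup f) (Vdot.sup h) ↔ ∀ i, ∃ j, Vdot.vles (f i) (h j) :=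
  Iff.rfl

theorem leUp_up_iff {Q : Type u} [Preorder Q] {p q : Q} :
    Vdot.leUp p (Vdot.up q) ↔ p ≤ q :=
  Iff.rfl

theorem leUp_sup_iff {Q : Type u} [Preorder Q] {p : Q} {f : ℕ → Vdot Q} :
    Vdot.leUp p (Vdot.sup f) ↔ ∃ j, Vdot.leUp p (f j) :=
  Iff.rfl

/-! #### Rank bound -/

theorem rk_G_le {Q : Type u} [Preorder Q] (Fr : Front) (g : Finset ℕ → Q) :
    ∀ (o : Ordinal) (σ : Finset ℕ), Fr.rk σ = o → TF Fr σ →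
      Vdot.rk (G Fr g σ) ≤ Fr.rk σ ∧ Vdot.rkp (G Fr g σ) ≤ Fr.rk σ + 1 := by
  intro o
  induction o using Ordinal.induction with
  | h o IH =>
    intro σ ho hσ
    subst ho
    rw [G_TF Fr g hσ]
    have hbound : ∀ n, Vdot.rkp (G Fr g (ch Fr σ n)) ≤ Fr.rk σ := by
      intro n
      rcases good_ch Fr hσ n with hF | hTF
      · rw [G_F Fr g hF]
        simp [Vdot.rkp]
      · have hlt := rk_ch_lt Fr hσ hTF
        have h2 := (IH _ hlt _ rfl hTF).2
        calc Vdot.rkp (G Fr g (ch Fr σ n)) ≤ Fr.rk (ch Fr σ n) + 1 := h2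
          _ ≤ Fr.rk σ := by rwa [Ordinal.add_one_eq_succ, Order.succ_le_iff]
    constructor
    · simp only [Vdot.rk]
      exact Ordinal.iSup_le hbound
    · simp only [Vdot.rkp]
      exact add_le_add_left (Ordinal.iSup_le hbound) 1

/-! #### The two auxiliary unfoldings of `vles` against members of `F` -/

theorem vles_to_F {Q : Type u} [Preorder Q] (Fr : Front) (g : Finset ℕ → Q) (q : Q) :
    ∀ (k : ℕ) (σ ρ : Finset ℕ), Good Fr σ → ρ ∈ Fr.F → InitSeg σ ρ → (ρ \ σ).card = k →
      Vdot.vles (G Fr g σ) (Vdot.up q) → g ρ ≤ q := by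
  intro k
  induction k with
  | zero =>
    intro σ ρ hσ hρ hIS hcard hv
    have hsub : ρ ⊆ σ := by
      rwa [Finset.card_eq_zero, Finset.sdiff_eq_empty_iff_subset] at hcard
    have heq : σ = ρ := Finset.Subset.antisymm hIS.1 hsub
    subst heq
    rw [G_F Fr g hρ] at hv
    exact (leUp_up_iff.1 (vles_up_iff.1 hv))
  | succ k IHk =>
    intro σ ρ hσ hρ hIS hcard hv
    have hne : σ ≠ ρ := by
      intro h
      subst h
      simp at hcard
    have hTF : TF Fr σ := by
      rcases hσ with hF | hTF
      · exact absurd (Fr.antichain σ hF ρ hρ hIS) hne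
      · exact hTF
    have hd : (ρ \ σ).Nonempty := Finset.card_pos.1 (by omega)
    set e := (ρ \ σ).min' hd with he
    have hemem := Finset.mem_sdiff.1 ((ρ \ σ).min'_mem hd)
    have heρ : e ∈ ρ := hemem.1
    have heσ : e ∉ σ := hemem.2
    have hlt : ∀ a ∈ σ, a < e := by
      intro a ha
      by_contra hc
      push_neg at hc
      exact heσ (hIS.2 a ha e heρ hc)
    have heD : e ∈ D Fr σ := ⟨⟨ρ, hρ, heρ⟩, hlt⟩
    have hIS2 : InitSeg (insert e σ) ρ := by
      refine ⟨Finset.insert_subset heρ hIS.1, fun a ha b hb hba => ?_⟩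
      rcases Finset.mem_insert.1 ha with heq | ha'
      · by_cases hbσ : b ∈ σ
        · exact Finset.mem_insert_of_mem hbσ
        · have hle : e ≤ b := Finset.min'_le _ b (Finset.mem_sdiff.2 ⟨hb, hbσ⟩)
          have hbe : b = e := le_antisymm (heq ▸ hba) hle
          rw [hbe]
          exact Finset.mem_insert_self _ _
      · exact Finset.mem_insert_of_mem (hIS.2 a ha' b hb hba)
    have hcard2 : (ρ \ insert e σ).card = k := by
      rw [Finset.sdiff_insert, Finset.card_erase_of_mem (Finset.mem_sdiff.2 ⟨heρ, heσ⟩), hcard]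
      omega
    rw [G_TF Fr g hTF] at hv
    have hv2 := vles_sup_up_iff.1 hv e
    rw [ch_of_mem Fr heD] at hv2
    exact IHk (insert e σ) ρ (good_insert Fr hTF heD) hρ hIS2 hcard2 hv2

theorem leUp_from_F {Q : Type u} [Preorder Q] (Fr : Front) (g : Finset ℕ → Q) (p : Q) :
    ∀ (o : Ordinal) (τ : Finset ℕ), Fr.rk τ = o → Good Fr τ →
      Vdot.leUp p (G Fr g τ) → ∃ ρ ∈ Fr.F, InitSeg τ ρ ∧ p ≤ g ρ := by
  intro o
  induction o using Ordinal.induction with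
  | h o IH =>
    intro τ ho hτ hle
    rcases hτ with hF | hTF
    · rw [G_F Fr g hF] at hle
      exact ⟨τ, hF, initSeg_refl τ, leUp_up_iff.1 hle⟩
    · rw [G_TF Fr g hTF] at hle
      obtain ⟨j, hj⟩ := leUp_sup_iff.1 hle
      rcases good_ch Fr hTF j with hF' | hTF'
      · rw [G_F Fr g hF'] at hj
        exact ⟨ch Fr τ j, hF', initSeg_ch Fr τ j, leUp_up_iff.1 hj⟩
      · subst ho
        obtain ⟨ρ, hρF, hρIS, hρle⟩ := IH _ (rk_ch_lt Fr hTF hTF') _ rfl (Or.inr hTF') hj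
        exact ⟨ρ, hρF, initSeg_trans (initSeg_ch Fr τ j) hρIS, hρle⟩

/-! #### The measure -/

noncomputable def mea (Fr : Front) (σ : Finset ℕ) : Ordinal :=
  if TF Fr σ then Fr.rk σ + 1 else 0

theorem mea_ch_lt {σ : Finset ℕ} (hσ : TF Fr σ) (n : ℕ) :
    mea Fr (ch Fr σ n) < mea Fr σ := by
  unfold mea
  rcases good_ch Fr hσ n with hF | hTF
  · rw [if_neg (not_TF_of_mem_F Fr hF), if_pos hσ, Ordinal.add_one_eq_succ]
    exact (zero_le (a := _)).trans_lt (Order.lt_succ _)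
  · rw [if_pos hTF, if_pos hσ]
    have hlt := rk_ch_lt Fr hσ hTF
    rwa [Ordinal.add_one_eq_succ, Ordinal.add_one_eq_succ, Order.succ_lt_succ_iff]

/-! #### The main lemma -/

theorem main {Q : Type u} [Preorder Q] (Fr : Front) (g : Finset ℕ → Q)
    (hbad : BadArray Fr g) :
    ∀ (m : Ordinal) (σ τ : Finset ℕ), max (mea Fr σ) (mea Fr τ) = m →
      Good Fr σ → Good Fr τ → ∀ (hσ : σ.Nonempty) (hτ : τ.Nonempty),
      σ.min' hσ < τ.min' hτ → σ.erase (σ.min' hσ) = τ.erase (τ.max' hτ) →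
      Vdot.vles (G Fr g σ) (G Fr g τ) → False := by
  intro m
  induction m using Ordinal.induction with
  | h m IH =>
    intro σ τ hm hGσ hGτ hσ hτ hmin herase hv
    have hlt_e : ∀ a ∈ σ, a < τ.max' hτ := by
      intro a ha
      by_cases haeq : a = σ.min' hσ
      · subst haeq
        exact lt_of_lt_of_le hmin (Finset.min'_le τ _ (τ.max'_mem hτ))
      · have haer : a ∈ σ.erase (σ.min' hσ) := Finset.mem_erase.2 ⟨haeq, ha⟩
        rw [herase] at haer
        exact lt_of_le_of_ne (Finset.le_max' τ a (Finset.mem_of_mem_erase haer))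
          (Finset.mem_erase.1 haer).1
    rcases hGτ with hτF | hτTF
    · rcases hGσ with hσF | hσTF
      · -- both in `F`
        rw [G_F Fr g hσF, G_F Fr g hτF] at hv
        have hle : g σ ≤ g τ := leUp_up_iff.1 (vles_up_iff.1 hv)
        refine hbad σ hσF τ hτF ⟨hσ, hτ, hmin, Or.inl ?_⟩ hle
        rw [herase]
        exact initSeg_erase_max hτ
      · -- `TF σ`, `τ ∈ F`
        set e := τ.max' hτ with he
        have heU : e ∈ Fr.union := good_subset_U Fr (Or.inl hτF) e (τ.max'_mem hτ)
        have heD : e ∈ D Fr σ := ⟨heU, hlt_e⟩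
        have hgood : Good Fr (insert e σ) := good_insert Fr hσTF heD
        obtain ⟨ρ, hρF, hρIS⟩ : ∃ ρ ∈ Fr.F, InitSeg (insert e σ) ρ := by
          rcases hgood with hF | ⟨ρ, h1, h2, _⟩
          · exact ⟨insert e σ, hF, initSeg_refl _⟩
          · exact ⟨ρ, h1, h2⟩
        rw [G_F Fr g hτF] at hv
        have hgle : g ρ ≤ g τ :=
          vles_to_F Fr g (g τ) (ρ \ σ).card σ ρ (Or.inr hσTF) hρF
            (initSeg_trans (initSeg_insert hlt_e) hρIS) rfl hv
        have hρne : ρ.Nonempty := mem_F_nonempty Fr hρF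
        have hminρ : ρ.min' hρne = σ.min' hσ := by
          rw [initSeg_min'_eq hρIS (Finset.insert_nonempty e σ) hρne]
          exact initSeg_min'_eq (initSeg_insert hlt_e) hσ _
        have hTri : Tri ρ τ := by
          refine ⟨hρne, hτ, by rw [hminρ]; exact hmin, Or.inr ?_⟩
          have step1 : (insert e σ).erase (σ.min' hσ) = τ := by
            rw [Finset.erase_insert_of_ne (hlt_e _ (σ.min'_mem hσ)).ne', herase, he,
              Finset.insert_erase (τ.max'_mem hτ)]
          have step2 : InitSeg ((insert e σ).erase (σ.min' hσ)) (ρ.erase (σ.min' hσ)) :=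
            initSeg_erase_min hρIS _
          rw [step1] at step2
          rwa [hminρ]
        exact hbad ρ hρF τ hτF hTri hgle
    · rcases hGσ with hσF | hσTF
      · -- `σ ∈ F`, `TF τ`
        rw [G_F Fr g hσF] at hv
        have hle : Vdot.leUp (g σ) (G Fr g τ) := vles_up_iff.1 hv
        obtain ⟨ρ, hρF, hρIS, hρle⟩ :=
          leUp_from_F Fr g (g σ) (Fr.rk τ) τ rfl (Or.inr hτTF) hle
        have hρne : ρ.Nonempty := mem_F_nonempty Fr hρF
        have hminρ : ρ.min' hρne = τ.min' hτ := initSeg_min'_eq hρIS hτ hρne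
        refine hbad σ hσF ρ hρF ⟨hσ, hρne, by rw [hminρ]; exact hmin, Or.inl ?_⟩ hρle
        rw [herase]
        exact initSeg_trans (initSeg_erase_max hτ) hρIS
      · -- both in `T_F`
        set e := τ.max' hτ with he
        have heU : e ∈ Fr.union := good_subset_U Fr (Or.inr hτTF) e (τ.max'_mem hτ)
        have heD : e ∈ D Fr σ := ⟨heU, hlt_e⟩
        rw [G_TF Fr g hσTF, G_TF Fr g hτTF] at hv
        obtain ⟨j, hj⟩ := vles_sup_sup_iff.1 hv e
        have hmea1 : mea Fr (insert e σ) < mea Fr σ := by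
          have h := mea_ch_lt Fr hσTF e
          rwa [ch_of_mem Fr heD] at h
        have hmea2 : mea Fr (ch Fr τ j) < mea Fr τ := mea_ch_lt Fr hτTF j
        rw [ch_of_mem Fr heD] at hj
        obtain ⟨w, hw, hchj⟩ := ch_spec Fr τ j
        rw [hchj] at hj hmea2
        have hGσ' : Good Fr (insert e σ) := good_insert Fr hσTF heD
        have hGτ' : Good Fr (insert w τ) := good_insert Fr hτTF hw
        have hne1 : (insert e σ).Nonempty := Finset.insert_nonempty _ _
        have hne2 : (insert w τ).Nonempty := Finset.insert_nonempty _ _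
        have hmin1 : (insert e σ).min' hne1 = σ.min' hσ :=
          initSeg_min'_eq (initSeg_insert hlt_e) hσ _
        have hmin2 : (insert w τ).min' hne2 = τ.min' hτ :=
          initSeg_min'_eq (initSeg_insert hw.2) hτ _
        have hmax2 : (insert w τ).max' hne2 = w := by
          rw [Finset.max'_insert (H := hτ)]
          exact max_eq_left (le_of_lt (hw.2 _ (τ.max'_mem hτ)))
        have her12 : (insert e σ).erase ((insert e σ).min' hne1) =
            (insert w τ).erase ((insert w τ).max' hne2) := by
          rw [hmin1, hmax2, Finset.erase_insert_of_ne (hlt_e _ (σ.min'_mem hσ)).ne', herase, he,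
            Finset.insert_erase (τ.max'_mem hτ),
            Finset.erase_insert (fun hc => lt_irrefl w (hw.2 w hc))]
        have hminlt : (insert e σ).min' hne1 < (insert w τ).min' hne2 := by
          rw [hmin1, hmin2]
          exact hmin
        have hmeas : max (mea Fr (insert e σ)) (mea Fr (insert w τ)) < m := by
          rw [← hm]
          exact max_lt (lt_of_lt_of_le hmea1 (le_max_left _ _))
            (lt_of_lt_of_le hmea2 (le_max_right _ _))
        exact IH _ hmeas (insert e σ) (insert w τ) rfl hGσ' hGτ' hne1 hne2 hminlt her12 hj

end S5

theorem statement5 {Q : Type u} [Preorder Q] (α : Ordinal.{0})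
    (Fr : Front) (g : Finset ℕ → Q) (hrk : Fr.rank ≤ α) (hbad : BadArray Fr g) :
    ∃ f : ℕ → Vdot Q, (∀ i, Vdot.memV α (f i)) ∧
      ∀ i j, i < j → ¬ Vdot.vles (f i) (f j) := by
  classical
  have hU : Fr.union.Infinite := S5.U_infinite Fr
  haveI : Infinite ↥(Fr.union) := hU.to_subtype
  let x : ℕ ↪o ℕ := Nat.orderEmbeddingOfSet Fr.union
  have hxU : ∀ k, (x k : ℕ) ∈ Fr.union := by
    intro k
    have hr : x k ∈ Set.range x := ⟨k, rfl⟩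
    rwa [Nat.orderEmbeddingOfSet_range] at hr
  have hgood : ∀ k, S5.Good Fr {x k} := fun k => S5.good_singleton Fr (hxU k)
  refine ⟨fun k => S5.G Fr g {x k}, ?_, ?_⟩
  · intro k
    show Vdot.IsUr (S5.G Fr g {x k}) ∨ Vdot.rk (S5.G Fr g {x k}) < α
    rcases hgood k with hF | hTF
    · rw [S5.G_F Fr g hF]
      exact Or.inl ⟨g {x k}, rfl⟩
    · refine Or.inr ?_
      have h1 : Vdot.rk (S5.G Fr g {x k}) ≤ Fr.rk {x k} :=
        (S5.rk_G_le Fr g (Fr.rk {x k}) {x k} rfl hTF).1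
      have hTFe : S5.TF Fr ∅ := by
        obtain ⟨ρ, hρ⟩ := Fr.infinite.nonempty
        exact ⟨ρ, hρ, S5.initSeg_empty ρ,
          (Finset.nonempty_iff_ne_empty.1 (S5.mem_F_nonempty Fr hρ)).symm⟩
      have h2 : Fr.rk {x k} < Fr.rk ∅ :=
        S5.TF_rk_lt Fr hTFe hTF (S5.initSeg_empty _)
          (Ne.symm (Finset.singleton_ne_empty _))
      calc Vdot.rk (S5.G Fr g {x k}) ≤ Fr.rk {x k} := h1
        _ < Fr.rk ∅ := h2
        _ ≤ α := hrk
  · intro i j hij hv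
    have hxlt : (x i : ℕ) < x j := x.strictMono hij
    refine S5.main Fr g hbad _ {x i} {x j} rfl (hgood i) (hgood j)
      (Finset.singleton_nonempty _) (Finset.singleton_nonempty _) ?_ ?_ hv
    · simpa using hxlt
    · simp
end
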